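/- With ψ_asymp = ψ₀ - (3/(2Λ)) r⁻² Δ̃ψ₀ + r⁻³ ψ₃ (coefficients r-independent, C⁴ and C² respectively), the Schwarzschild-de Sitter wave operator satisfies the pointwise bound |□_g ψ_asymp| ≤ C r⁻⁴ Σ_{|α|≤4} |∇̃^α ψ₀| + C r⁻⁵ Σ_{|α|≤2} |∇̃^α ψ₃| for all r ≥ r₀ > r_C, with C depending only on Λ, m, r₀. -/

import Mathlib

noncomputable section

/-- The unit sphere `S² ⊂ ℝ³`. -/
abbrev S2 : Type := Metric.sphere (0 : EuclideanSpace ℝ (Fin 3)) 1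

/-- Second `t`-derivative of a function on the cylinder `ℝ×S²`. -/
def tdd (f : ℝ → S2 → ℝ) : ℝ → S2 → ℝ := fun t ω => deriv (deriv (fun s => f s ω)) t

/-- The conformal boundary Laplacian `Δ̃ = (3/Λ)∂_t² + Δ_{S²}`, with the
spherical Laplacian modelled by a linear operator `ΔS`. -/
def tLap (Λ : ℝ) (ΔS : (ℝ → S2 → ℝ) →ₗ[ℝ] (ℝ → S2 → ℝ)) (f : ℝ → S2 → ℝ) :
    ℝ → S2 → ℝ := fun t ω => (3 / Λ) * tdd f t ω + ΔS f t ω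

/-- The Schwarzschild-de Sitter wave operator
`□_g ψ = φ²∂_t²ψ - r⁻²∂_r(r²φ⁻²∂_rψ) + r⁻²Δ_{S²}ψ`, `φ⁻² = Λr²/3 - 1 + 2m/r`. -/
def BoxSdS (Λ m : ℝ) (ΔS : (ℝ → S2 → ℝ) →ₗ[ℝ] (ℝ → S2 → ℝ))
    (ψ : ℝ → ℝ → S2 → ℝ) (r t : ℝ) (ω : S2) : ℝ :=
  (Λ * r ^ 2 / 3 - 1 + 2 * m / r)⁻¹ * tdd (ψ r) t ω
    - (1 / r ^ 2) * deriv (fun s : ℝ =>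
        s ^ 2 * (Λ * s ^ 2 / 3 - 1 + 2 * m / s) * deriv (fun u => ψ u t ω) s) r
    + (1 / r ^ 2) * ΔS (ψ r) t ω

/-!
Write `W = φ⁻²`. The radial part `-r⁻²∂_r(r²W∂_r ·)` of `□_g` sends `r⁻²` to
`(2Λ/3) r⁻² + O(r⁻⁴)` and `r⁻³` to `O(r⁻⁵)`, so the correction `-(3/(2Λ)) r⁻² Δ̃ψ₀` cancels
exactly the `r⁻²` part `W⁻¹∂_t²ψ₀ + r⁻²Δ_{S²}ψ₀ = r⁻²Δ̃ψ₀ + O(r⁻⁴)` of `□_g ψ₀`. What remains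
is an explicit combination of `r⁻⁴` and `r⁻⁵` times cylinder derivatives of `ψ₀` and `ψ₃`,
whose coefficients are polynomials in `m/r` and `r²/W`. They are bounded on `r ≥ r₀`: by
subextremality `W(3m) < 0`, so `r₀ > 3m`, and `W/r²` increases on `[3m, ∞)`.
-/

open Finset in
theorem abs_sum_mul_le_of_abs_le {ι : Type*} (s : Finset ι) {a : ι → ℝ} (x : ι → ℝ) {C : ℝ}
    (h : ∀ i ∈ s, |a i| ≤ C) : |∑ i ∈ s, a i * x i| ≤ C * ∑ i ∈ s, |x i| := by
  rw [mul_sum]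
  refine (abs_sum_le_sum_abs _ _).trans (sum_le_sum fun i hi => ?_)
  rw [abs_mul]
  exact mul_le_mul_of_nonneg_right (h i hi) (abs_nonneg _)

theorem abs_div_add_div_le {X Y S T C a b : ℝ} (ha : 0 < a) (hb : 0 < b) (hX : |X| ≤ C * S)
    (hY : |Y| ≤ C * T) : |X / a + Y / b| ≤ C / a * S + C / b * T := by
  calc _ ≤ |X| / a + |Y| / b := by
        simpa only [abs_div, abs_of_pos ha, abs_of_pos hb] using abs_add_le (X / a) (Y / b)
    _ ≤ C * S / a + C * T / b := by gcongr
    _ = _ := by ring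

theorem abs_one_sub_mul_div_le_one {c m r : ℝ} (hc : 0 ≤ c) (hc6 : c ≤ 6) (hm : 0 ≤ m)
    (h3m : 3 * m < r) : |1 - c * m / r| ≤ 1 := by
  have hr : 0 < r := by linarith
  have hcm : c * m / r ≤ 2 := by
    rw [div_le_iff₀ hr]
    nlinarith
  rw [abs_le]
  constructor <;> linarith [div_nonneg (mul_nonneg hc hm) hr.le]

theorem hasDerivAt_const_div_pow (a : ℝ) (n : ℕ) {s : ℝ} (hs : s ≠ 0) :
    HasDerivAt (fun u => a / u ^ n) (-(n * a / s ^ (n + 1))) s := by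
  refine ((hasDerivAt_const s a).fun_div (hasDerivAt_pow n s) (pow_ne_zero n hs)).congr_deriv ?_
  rcases n with _ | n
  · simp
  · simp only [add_tsub_cancel_right]
    field_simp
    ring

def phiInvSq (Λ m r : ℝ) : ℝ := Λ * r ^ 2 / 3 - 1 + 2 * m / r

theorem three_mul_lt_of_forall_phiInvSq_pos {Λ m r₀ : ℝ} (hm : 0 < m)
    (hsub : 3 * m * Real.sqrt Λ < 1) (hw : ∀ s ≥ r₀, 0 < phiInvSq Λ m s) : 3 * m < r₀ := by
  by_contra! h
  have hpos := hw (3 * m) h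
  have h23 : 2 * m / (3 * m) = 2 / 3 := by field_simp
  simp only [phiInvSq, h23] at hpos
  have hΛ : 0 < Λ := by nlinarith
  have h0 : 0 ≤ 3 * m * Real.sqrt Λ := by positivity
  nlinarith [mul_self_lt_mul_self h0 hsub, Real.sq_sqrt hΛ.le]

theorem phiInvSq_div_sq_le {Λ m s r : ℝ} (hs : 0 < s) (h3m : 3 * m ≤ s) (hsr : s ≤ r) :
    phiInvSq Λ m s / s ^ 2 ≤ phiInvSq Λ m r / r ^ 2 := by
  have hr : 0 < r := hs.trans_le hsr
  have key : 6 * m * (r ^ 2 + r * s + s ^ 2) ≤ 3 * r * s * (r + s) := by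
    nlinarith [mul_le_mul_of_nonneg_right (by linarith : 6 * m ≤ 2 * s)
      (by positivity : 0 ≤ r ^ 2 + r * s + s ^ 2), mul_nonneg hs.le (sub_nonneg.2 hsr)]
  rw [phiInvSq, phiInvSq, div_le_div_iff₀ (by positivity) (by positivity)]
  field_simp
  nlinarith [mul_le_mul_of_nonneg_left key (sub_nonneg.2 hsr), mul_pos hs hr]

theorem deriv_profile (A a B : ℝ) {s : ℝ} (hs : s ≠ 0) :
    deriv (fun u : ℝ => A - a / u ^ 2 + B / u ^ 3) s = 2 * a / s ^ 3 - 3 * B / s ^ 4 := by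
  have h : HasDerivAt (fun u : ℝ => A - a / u ^ 2 + B / u ^ 3) _ s :=
    ((hasDerivAt_const s A).sub (hasDerivAt_const_div_pow a 2 hs)).add
      (hasDerivAt_const_div_pow B 3 hs)
  rw [h.deriv]
  push_cast
  ring

theorem deriv_radialFlux (Λ m A a B : ℝ) {r : ℝ} (hr : r ≠ 0) :
    deriv (fun s => s ^ 2 * phiInvSq Λ m s * deriv (fun u => A - a / u ^ 2 + B / u ^ 3) s) r
      = 2 * a * Λ / 3 + 2 * a / r ^ 2 - (6 * B + 8 * m * a) / r ^ 3 + 18 * m * B / r ^ 4 := by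
  have hflux : (fun s => s ^ 2 * phiInvSq Λ m s * deriv (fun u => A - a / u ^ 2 + B / u ^ 3) s)
      =ᶠ[nhds r] fun s => 2 * Λ * a / 3 * s - 2 * a / s ^ 1 + (4 * m * a + 3 * B) / s ^ 2
        - Λ * B - 6 * m * B / s ^ 3 := by
    filter_upwards [eventually_ne_nhds hr] with s hs
    rw [deriv_profile A a B hs, phiInvSq]
    field_simp
    ring
  have h : HasDerivAt (fun s => 2 * Λ * a / 3 * s - 2 * a / s ^ 1
      + (4 * m * a + 3 * B) / s ^ 2 - Λ * B - 6 * m * B / s ^ 3) _ r :=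
    (((((hasDerivAt_id r).const_mul (2 * Λ * a / 3)).sub
      (hasDerivAt_const_div_pow _ 1 hr)).add (hasDerivAt_const_div_pow _ 2 hr)).sub_const
      (Λ * B)).sub (hasDerivAt_const_div_pow _ 3 hr)
  rw [hflux.deriv_eq, h.deriv]
  field_simp
  ring

theorem tdd_add {f g : ℝ → S2 → ℝ} {ω : S2} (hf : ContDiff ℝ 2 fun s => f s ω)
    (hg : ContDiff ℝ 2 fun s => g s ω) (t : ℝ) : tdd (f + g) t ω = tdd f t ω + tdd g t ω := by
  have h1 : deriv (fun s => (f + g) s ω) = deriv (fun s => f s ω) + deriv (fun s => g s ω) := by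
    funext s
    exact deriv_add (hf.differentiable two_ne_zero s) (hg.differentiable two_ne_zero s)
  rw [tdd, h1]
  exact deriv_add (hf.differentiable_deriv_two t) (hg.differentiable_deriv_two t)

theorem tdd_smul (c : ℝ) (f : ℝ → S2 → ℝ) (t : ℝ) (ω : S2) : tdd (c • f) t ω = c * tdd f t ω := by
  simp only [tdd, Pi.smul_apply, smul_eq_mul, deriv_const_mul_field']

theorem contDiff_tLap {Λ : ℝ} {ΔS : (ℝ → S2 → ℝ) →ₗ[ℝ] (ℝ → S2 → ℝ)} {f : ℝ → S2 → ℝ} {ω : S2}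
    (hf : ContDiff ℝ 4 fun t => f t ω) (hΔf : ContDiff ℝ 2 fun t => ΔS f t ω) :
    ContDiff ℝ 2 fun t => tLap Λ ΔS f t ω :=
  (contDiff_const.mul (hf.deriv'.deriv' : ContDiff ℝ 2 _)).add hΔf

def asympSol (Λ : ℝ) (ΔS : (ℝ → S2 → ℝ) →ₗ[ℝ] (ℝ → S2 → ℝ)) (ψ0 ψ3 : ℝ → S2 → ℝ) :
    ℝ → ℝ → S2 → ℝ :=
  fun u t ω => ψ0 t ω - (3 / (2 * Λ)) * tLap Λ ΔS ψ0 t ω / u ^ 2 + ψ3 t ω / u ^ 3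

theorem BoxSdS_eq (Λ m : ℝ) (ΔS : (ℝ → S2 → ℝ) →ₗ[ℝ] (ℝ → S2 → ℝ)) (ψ : ℝ → ℝ → S2 → ℝ)
    (r t : ℝ) (ω : S2) :
    BoxSdS Λ m ΔS ψ r t ω = (phiInvSq Λ m r)⁻¹ * tdd (ψ r) t ω
      - deriv (fun s => s ^ 2 * phiInvSq Λ m s * deriv (fun u => ψ u t ω) s) r / r ^ 2
      + ΔS (ψ r) t ω / r ^ 2 := by
  unfold BoxSdS phiInvSq
  ring

section
variable {Λ : ℝ} {ΔS : (ℝ → S2 → ℝ) →ₗ[ℝ] (ℝ → S2 → ℝ)} {ψ0 ψ3 : ℝ → S2 → ℝ}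

theorem asympSol_eq (r : ℝ) :
    asympSol Λ ΔS ψ0 ψ3 r = ψ0 + (-(3 / (2 * Λ)) / r ^ 2) • tLap Λ ΔS ψ0 + (r ^ 3)⁻¹ • ψ3 := by
  funext t ω
  simp only [asympSol, Pi.add_apply, Pi.smul_apply, smul_eq_mul]
  ring

theorem tdd_asympSol {ω : S2} (h0 : ContDiff ℝ 4 fun t => ψ0 t ω)
    (h0' : ContDiff ℝ 2 fun t => ΔS ψ0 t ω) (h3 : ContDiff ℝ 2 fun t => ψ3 t ω) (r t : ℝ) :
    tdd (asympSol Λ ΔS ψ0 ψ3 r) t ω = tdd ψ0 t ω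
      - 3 / (2 * Λ) / r ^ 2 * tdd (tLap Λ ΔS ψ0) t ω + tdd ψ3 t ω / r ^ 3 := by
  have hL := contDiff_tLap (Λ := Λ) h0 h0'
  have h02 : ContDiff ℝ 2 fun t => ψ0 t ω := h0.of_le (by norm_num)
  rw [asympSol_eq, tdd_add (h02.add (contDiff_const.mul hL)) (contDiff_const.mul h3),
    tdd_add h02 (contDiff_const.mul hL), tdd_smul, tdd_smul]
  ring

theorem sphereLap_asympSol (r t : ℝ) (ω : S2) :
    ΔS (asympSol Λ ΔS ψ0 ψ3 r) t ω = tLap Λ ΔS ψ0 t ω - 3 / Λ * tdd ψ0 t ω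
      - 3 / (2 * Λ) / r ^ 2 * ΔS (tLap Λ ΔS ψ0) t ω + ΔS ψ3 t ω / r ^ 3 := by
  rw [asympSol_eq, map_add, map_add, map_smul, map_smul]
  simp only [Pi.add_apply, Pi.smul_apply, smul_eq_mul, tLap]
  ring

theorem BoxSdS_asympSol (m : ℝ) {r : ℝ} (hΛ : Λ ≠ 0) (hr : r ≠ 0) (hW : phiInvSq Λ m r ≠ 0)
    {ω : S2} (h0 : ContDiff ℝ 4 fun t => ψ0 t ω)
    (h0' : ContDiff ℝ 2 fun t => ΔS ψ0 t ω) (h3 : ContDiff ℝ 2 fun t => ψ3 t ω) (t : ℝ) :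
    BoxSdS Λ m ΔS (asympSol Λ ΔS ψ0 ψ3) r t ω =
      (3 / Λ * (1 - 2 * m / r) * (r ^ 2 / phiInvSq Λ m r) * tdd ψ0 t ω
          - 3 / (2 * Λ) * (r ^ 2 / phiInvSq Λ m r) * tdd (tLap Λ ΔS ψ0) t ω
          - 3 / Λ * (1 - 4 * m / r) * tLap Λ ΔS ψ0 t ω
          - 3 / (2 * Λ) * ΔS (tLap Λ ΔS ψ0) t ω) / r ^ 4
        + (r ^ 2 / phiInvSq Λ m r * tdd ψ3 t ω + 6 * (1 - 3 * m / r) * ψ3 t ω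
          + ΔS ψ3 t ω) / r ^ 5 := by
  rw [BoxSdS_eq, tdd_asympSol h0 h0' h3, sphereLap_asympSol]
  change _ - deriv (fun s => s ^ 2 * phiInvSq Λ m s * deriv (fun u =>
    ψ0 t ω - 3 / (2 * Λ) * tLap Λ ΔS ψ0 t ω / u ^ 2 + ψ3 t ω / u ^ 3) s) r / r ^ 2 + _ = _
  rw [deriv_radialFlux _ _ _ _ _ hr]
  have key : Λ * r ^ 3 = 3 * r * phiInvSq Λ m r + 3 * r - 6 * m := by
    unfold phiInvSq
    field_simp
    ring
  generalize phiInvSq Λ m r = W at *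
  field_simp
  linear_combination (2 * r ^ 3 * tdd ψ0 t ω) * key

end

section
variable {Λ m r ρ K : ℝ}

theorem abs_leading_le (hΛ : 0 < Λ) (hm : 0 ≤ m) (h3m : 3 * m < r) (hρ : 0 < ρ) (hρK : ρ ≤ K)
    (a2 L l2 SL : ℝ) :
    |3 / Λ * (1 - 2 * m / r) * ρ * a2 - 3 / (2 * Λ) * ρ * l2 - 3 / Λ * (1 - 4 * m / r) * L
        - 3 / (2 * Λ) * SL| ≤ 3 / Λ * (1 + K) * (|a2| + |L| + |l2| + |SL|) := by
  have hP : 0 < 3 / Λ := by positivity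
  have h2 := mul_le_mul_of_nonneg_left
    (abs_one_sub_mul_div_le_one (c := 2) (by norm_num) (by norm_num) hm h3m) (mul_pos hP hρ).le
  have h4 := mul_le_mul_of_nonneg_left
    (abs_one_sub_mul_div_le_one (c := 4) (by norm_num) (by norm_num) hm h3m) hP.le
  have hPK : 3 / Λ * ρ ≤ 3 / Λ * K := by gcongr
  calc _ = |∑ i, ![3 / Λ * (1 - 2 * m / r) * ρ, -(3 / Λ * (1 - 4 * m / r)),
        -(3 / Λ / 2 * ρ), -(3 / Λ / 2)] i * ![a2, L, l2, SL] i| := by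
        simp [Fin.sum_univ_four]
        ring_nf
    _ ≤ 3 / Λ * (1 + K) * ∑ i, |![a2, L, l2, SL] i| := by
        refine abs_sum_mul_le_of_abs_le _ _ fun i _ => ?_
        fin_cases i <;> simp [abs_of_pos hP, abs_of_pos hρ, abs_of_pos (half_pos hP)] <;>
          nlinarith
    _ = _ := by simp [Fin.sum_univ_four, add_assoc]

theorem abs_subleading_le (hm : 0 ≤ m) (h3m : 3 * m < r) (hρ : 0 < ρ) (hρK : ρ ≤ K)
    (B b2 S3 : ℝ) :
    |ρ * b2 + 6 * (1 - 3 * m / r) * B + S3| ≤ (K + 6) * (|B| + |b2| + |S3|) := by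
  have h3 := mul_le_mul_of_nonneg_left
    (abs_one_sub_mul_div_le_one (c := 3) (by norm_num) (by norm_num) hm h3m)
    (by norm_num : (0 : ℝ) ≤ 6)
  calc _ = |∑ i, ![6 * (1 - 3 * m / r), ρ, 1] i * ![B, b2, S3] i| := by
        simp [Fin.sum_univ_three]
        ring_nf
    _ ≤ (K + 6) * ∑ i, |![B, b2, S3] i| := by
        refine abs_sum_mul_le_of_abs_le _ _ fun i _ => ?_
        fin_cases i <;> simp [abs_of_pos hρ] <;> linarith
    _ = _ := by simp [Fin.sum_univ_three, add_assoc]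

theorem abs_expansion_le (hΛ : 0 < Λ) (hm : 0 ≤ m) (h3m : 3 * m < r) (hρ : 0 < ρ) (hρK : ρ ≤ K)
    (A a2 L l2 SL B b2 S3 : ℝ) :
    |(3 / Λ * (1 - 2 * m / r) * ρ * a2 - 3 / (2 * Λ) * ρ * l2 - 3 / Λ * (1 - 4 * m / r) * L
          - 3 / (2 * Λ) * SL) / r ^ 4 + (ρ * b2 + 6 * (1 - 3 * m / r) * B + S3) / r ^ 5|
      ≤ (3 / Λ * (1 + K) + K + 6) / r ^ 4 * (|A| + |a2| + |L| + |l2| + |SL|)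
        + (3 / Λ * (1 + K) + K + 6) / r ^ 5 * (|B| + |b2| + |S3|) := by
  have hK : 0 ≤ K := hρ.le.trans hρK
  have hP : 0 ≤ 3 / Λ * (1 + K) := by positivity
  have hr : 0 < r := by linarith
  refine abs_div_add_div_le (pow_pos hr 4) (pow_pos hr 5) ?_ ?_
  · refine (abs_leading_le hΛ hm h3m hρ hρK a2 L l2 SL).trans
      (mul_le_mul (by linarith) (by linarith [abs_nonneg A]) (by positivity) (by positivity))
  · exact (abs_subleading_le hm h3m hρ hρK B b2 S3).trans
      (mul_le_mul_of_nonneg_right (by linarith) (by positivity))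

end

/-- **Pointwise bound on the wave operator of the asymptotic solution.**
With `ψ_asymp = ψ₀ - (3/(2Λ)) r⁻² Δ̃ψ₀ + r⁻³ ψ₃`, one has
`|□_g ψ_asymp| ≤ C r⁻⁴ Σ_{|α|≤4}|∇̃^α ψ₀| + C r⁻⁵ Σ_{|α|≤2}|∇̃^α ψ₃|`
for all `r ≥ r₀ > r_C`, with `C = C(Λ,m,r₀)` (here with the explicit
combinations of cylinder derivatives of `ψ₀` up to order 4 and of `ψ₃` up to
order 2 that occur). -/
theorem stmt_7 (Λ m r₀ : ℝ) (hΛ : 0 < Λ) (hm : 0 < m)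
    (hsub : 3 * m * Real.sqrt Λ < 1) (hr₀ : 0 < r₀)
    (hw : ∀ s ≥ r₀, 0 < Λ * s ^ 2 / 3 - 1 + 2 * m / s)
    (ΔS : (ℝ → S2 → ℝ) →ₗ[ℝ] (ℝ → S2 → ℝ))
    (ψ0 ψ3 : ℝ → S2 → ℝ)
    (hψ0 : ∀ ω : S2, ContDiff ℝ 4 (fun t => ψ0 t ω))
    (hψ0' : ∀ ω : S2, ContDiff ℝ 2 (fun t => ΔS ψ0 t ω))
    (hψ3 : ∀ ω : S2, ContDiff ℝ 2 (fun t => ψ3 t ω)) :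
    ∃ C > (0 : ℝ), ∀ r ≥ r₀, ∀ (t : ℝ) (ω : S2),
      |BoxSdS Λ m ΔS
          (fun u t' ω' => ψ0 t' ω' - (3 / (2 * Λ)) * tLap Λ ΔS ψ0 t' ω' / u ^ 2
            + ψ3 t' ω' / u ^ 3) r t ω|
        ≤ C / r ^ 4 *
            (|ψ0 t ω| + |tdd ψ0 t ω| + |tLap Λ ΔS ψ0 t ω|
              + |tdd (tLap Λ ΔS ψ0) t ω| + |ΔS (tLap Λ ΔS ψ0) t ω|)
          + C / r ^ 5 * (|ψ3 t ω| + |tdd ψ3 t ω| + |ΔS ψ3 t ω|) := by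
  have h3m := three_mul_lt_of_forall_phiInvSq_pos hm hsub hw
  have hW₀ : 0 < phiInvSq Λ m r₀ := hw r₀ le_rfl
  set K := r₀ ^ 2 / phiInvSq Λ m r₀
  refine ⟨3 / Λ * (1 + K) + K + 6, by positivity, fun r hr t ω => ?_⟩
  have hr0 : 0 < r := hr₀.trans_le hr
  have hW : 0 < phiInvSq Λ m r := hw r hr
  have hρK : r ^ 2 / phiInvSq Λ m r ≤ K := by
    simpa only [inv_div] using
      inv_anti₀ (div_pos hW₀ (pow_pos hr₀ 2)) (phiInvSq_div_sq_le hr₀ h3m.le hr)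
  change |BoxSdS Λ m ΔS (asympSol Λ ΔS ψ0 ψ3) r t ω| ≤ _
  rw [BoxSdS_asympSol m hΛ.ne' hr0.ne' hW.ne' (hψ0 ω) (hψ0' ω) (hψ3 ω)]
  exact abs_expansion_le hΛ hm.le (h3m.trans_le hr) (by positivity) hρK _ _ _ _ _ _ _ _

end
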